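/- Soft one-step strengthening is monotone: if P and Q are syntactic protocols such that Q_{ab} → P_{ab} is valid for all distinct agents a,b (so Q is a strengthening of P), then Q^◊_{ab} → P^◊_{ab} is valid for all distinct a,b; in particular the extension of Q^◊ is contained in the extension of P^◊ on every initial gossip graph. -/
import Mathlib


set_option maxHeartbeats 1000000

structure GossipGraph (A : Type) : Type where
  N : A → A → Prop
  S : A → A → Prop
  refl_S : ∀ a, S a a
  S_sub_N : ∀ a b, S a b → N a b

namespace Gossip

variable {A : Type}

def Initial (G : GossipGraph A) : Prop := ∀ a b, G.S a b ↔ a = b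

def doCall (G : GossipGraph A) (c : A × A) : GossipGraph A where
  N x y := G.N x y ∨ ((x = c.1 ∨ x = c.2) ∧ (G.N c.1 y ∨ G.N c.2 y))
  S x y := G.S x y ∨ ((x = c.1 ∨ x = c.2) ∧ (G.S c.1 y ∨ G.S c.2 y))
  refl_S a := Or.inl (G.refl_S a)
  S_sub_N a b h := by
    rcases h with h | ⟨h1, h2 | h2⟩
    · exact Or.inl (G.S_sub_N a b h)
    · exact Or.inr ⟨h1, Or.inl (G.S_sub_N _ _ h2)⟩
    · exact Or.inr ⟨h1, Or.inr (G.S_sub_N _ _ h2)⟩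

def doCalls (G : GossipGraph A) (σ : List (A × A)) : GossipGraph A :=
  σ.foldl doCall G

def PossibleSeq (G : GossipGraph A) : List (A × A) → Prop
  | [] => True
  | c :: σ => c.1 ≠ c.2 ∧ G.N c.1 c.2 ∧ PossibleSeq (doCall G c) σ

mutual
  inductive Form (A : Type) : Type where
    | top : Form A
    | atomN : A → A → Form A
    | atomS : A → A → Form A
    | neg : Form A → Form A
    | conj : Form A → Form A → Form A
    | K : A → (A → A → Form A) → Form A → Form A
    | box : Prog A → Form A → Form A
  inductive Prog (A : Type) : Type where
    | test : Form A → Prog A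
    | call : A → A → Prog A
    | seq : Prog A → Prog A → Prog A
    | cup : Prog A → Prog A → Prog A
    | star : Prog A → Prog A
end

abbrev Protocol (A : Type) := A → A → Form A

inductive Epi (G : GossipGraph A) (perm : List (A × A) → (A × A) → Prop) (a : A) :
    List (A × A) → List (A × A) → Prop where
  | refl : Epi G perm a [] []
  | call_out {σ τ : List (A × A)} {b : A} :
      Epi G perm a σ τ →
      (∀ x, (doCalls G σ).N b x ↔ (doCalls G τ).N b x) →
      (∀ x, (doCalls G σ).S b x ↔ (doCalls G τ).S b x) →
      perm σ (a, b) → perm τ (a, b) →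
      Epi G perm a (σ ++ [(a, b)]) (τ ++ [(a, b)])
  | call_in {σ τ : List (A × A)} {b : A} :
      Epi G perm a σ τ →
      (∀ x, (doCalls G σ).N b x ↔ (doCalls G τ).N b x) →
      (∀ x, (doCalls G σ).S b x ↔ (doCalls G τ).S b x) →
      perm σ (b, a) → perm τ (b, a) →
      Epi G perm a (σ ++ [(b, a)]) (τ ++ [(b, a)])
  | other {σ τ : List (A × A)} {c d e f : A} :
      Epi G perm a σ τ →
      c ≠ a → d ≠ a → e ≠ a → f ≠ a →
      perm σ (c, d) → perm τ (e, f) →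
      Epi G perm a (σ ++ [(c, d)]) (τ ++ [(e, f)])

mutual
  def Sat (G : GossipGraph A) : List (A × A) → Form A → Prop
    | _, Form.top => True
    | σ, Form.atomN a b => (doCalls G σ).N a b
    | σ, Form.atomS a b => (doCalls G σ).S a b
    | σ, Form.neg φ => ¬ Sat G σ φ
    | σ, Form.conj φ ψ => Sat G σ φ ∧ Sat G σ ψ
    | σ, Form.K a P φ =>
        ∀ τ, Epi G (fun ρ c => c.1 ≠ c.2 ∧ (doCalls G ρ).N c.1 c.2 ∧ Sat G ρ (P c.1 c.2)) a τ σ →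
          Sat G τ φ
    | σ, Form.box π φ => ∀ τ, ProgRel G π σ τ → Sat G τ φ
  def ProgRel (G : GossipGraph A) : Prog A → List (A × A) → List (A × A) → Prop
    | Prog.test φ, σ, τ => σ = τ ∧ Sat G σ φ
    | Prog.call a b, σ, τ => a ≠ b ∧ (doCalls G σ).N a b ∧ τ = σ ++ [(a, b)]
    | Prog.seq π π', σ, τ => ∃ ρ, ProgRel G π σ ρ ∧ ProgRel G π' ρ τ
    | Prog.cup π π', σ, τ => ProgRel G π σ τ ∨ ProgRel G π' σ τ
    | Prog.star π, σ, τ => Relation.ReflTransGen (fun x y => ProgRel G π x y) σ τ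
end


/-- A call `ab` is `P`-permitted at `(G, σ)` iff `a ≠ b`, `N^σ a b` and `G,σ ⊨ P_{ab}`. -/
def Permits (G : GossipGraph A) (P : Protocol A) (σ : List (A × A)) (c : A × A) : Prop :=
  c.1 ≠ c.2 ∧ (doCalls G σ).N c.1 c.2 ∧ Sat G σ (P c.1 c.2)

/-- The least set of call sequences containing `ε` and closed under adding permitted calls. -/
inductive Ext (G : GossipGraph A) (perm : List (A × A) → (A × A) → Prop) : List (A × A) → Prop where
  | nil : Ext G perm []
  | snoc {σ : List (A × A)} {c : A × A} : Ext G perm σ → perm σ c → Ext G perm (σ ++ [c])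

/-- The extension of a syntactic protocol `P` on an (initial) gossip graph `G`. -/
def extension (P : Protocol A) (G : GossipGraph A) : Set (List (A × A)) :=
  { σ | Ext G (Permits G P) σ }

/-- A formula is valid iff it is true at every gossip state, i.e. at every pair of an
initial gossip graph and a call sequence possible on it. -/
def Valid (φ : Form A) : Prop :=
  ∀ G : GossipGraph A, Initial G → ∀ σ : List (A × A), PossibleSeq G σ → Sat G σ φ

def impF (φ ψ : Form A) : Form A := Form.neg (Form.conj φ (Form.neg ψ))
def orF (φ ψ : Form A) : Form A := Form.neg (Form.conj (Form.neg φ) (Form.neg ψ))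
def iffF (φ ψ : Form A) : Form A := Form.conj (impF φ ψ) (impF ψ φ)
/-- The epistemic "possibility" dual `K̂ := ¬K¬`. -/
def hatK (a : A) (P : Protocol A) (φ : Form A) : Form A := Form.neg (Form.K a P (Form.neg φ))

/-- A semantic protocol, as raw data: a map from (initial) gossip graphs to sets of call
sequences. -/
abbrev RawSem (A : Type) := GossipGraph A → Set (List (A × A))

/-- For a semantic protocol, a call `c` is permitted at `(G,σ)` iff `σ;c ∈ P(G)`. -/
def semPerm (Q : RawSem A) (G : GossipGraph A) (σ : List (A × A)) (c : A × A) : Prop :=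
  σ ++ [c] ∈ Q G

/-- `σ` is terminal (in `Q(G)`) iff no further call is permitted. -/
def TerminalIn (Q : RawSem A) (G : GossipGraph A) (σ : List (A × A)) : Prop :=
  ∀ c : A × A, σ ++ [c] ∉ Q G

/-- All agents are experts: everyone knows all secrets. -/
def AllExpert (G : GossipGraph A) : Prop := ∀ a b : A, G.S a b

/-- A semantic protocol: assigns to each initial gossip graph a set of call sequences
possible on it, containing the empty sequence and closed under prefixes. -/
structure SemProtocol (A : Type) : Type where
  ext : GossipGraph A → Set (List (A × A))
  nil_mem : ∀ G : GossipGraph A, Initial G → [] ∈ ext G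
  prefix_closed : ∀ G : GossipGraph A, Initial G → ∀ σ c, σ ++ [c] ∈ ext G → σ ∈ ext G
  possible : ∀ G : GossipGraph A, Initial G → ∀ σ ∈ ext G, PossibleSeq G σ

/-- A semantic protocol is epistemic iff a call `ab` is permitted at `(G,σ)` exactly when it
is permitted at all states that agent `a` cannot distinguish from `(G,σ)`. -/
def SemEpistemic (Q : RawSem A) : Prop :=
  ∀ G : GossipGraph A, Initial G → ∀ σ ∈ Q G, ∀ a b : A, a ≠ b →
    (σ ++ [(a, b)] ∈ Q G ↔ ∀ τ, Epi G (semPerm Q G) a τ σ → τ ++ [(a, b)] ∈ Q G)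

/-- Relabelling the agents of a gossip graph along a permutation. -/
def mapGraph (J : Equiv.Perm A) (G : GossipGraph A) : GossipGraph A where
  N x y := G.N (J.symm x) (J.symm y)
  S x y := G.S (J.symm x) (J.symm y)
  refl_S a := G.refl_S _
  S_sub_N a b h := G.S_sub_N _ _ h

/-- Relabelling a call sequence, callwise. -/
def mapSeq (J : Equiv.Perm A) (σ : List (A × A)) : List (A × A) :=
  σ.map (fun c => (J c.1, J c.2))

mutual
  /-- Relabelling the agents in a formula along a permutation. -/
  def mapForm (J : Equiv.Perm A) : Form A → Form A
    | Form.top => Form.top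
    | Form.atomN a b => Form.atomN (J a) (J b)
    | Form.atomS a b => Form.atomS (J a) (J b)
    | Form.neg φ => Form.neg (mapForm J φ)
    | Form.conj φ ψ => Form.conj (mapForm J φ) (mapForm J ψ)
    | Form.K a P φ => Form.K (J a) (fun x y => mapForm J (P (J.symm x) (J.symm y))) (mapForm J φ)
    | Form.box π φ => Form.box (mapProg J π) (mapForm J φ)
  /-- Relabelling the agents in a program along a permutation. -/
  def mapProg (J : Equiv.Perm A) : Prog A → Prog A
    | Prog.test φ => Prog.test (mapForm J φ)
    | Prog.call a b => Prog.call (J a) (J b)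
    | Prog.seq π π' => Prog.seq (mapProg J π) (mapProg J π')
    | Prog.cup π π' => Prog.cup (mapProg J π) (mapProg J π')
    | Prog.star π => Prog.star (mapProg J π)
end

/-- A semantic protocol is symmetric iff it commutes with relabelling of the agents. -/
def SemSymmetric (Q : RawSem A) : Prop :=
  ∀ (J : Equiv.Perm A) (G : GossipGraph A), Initial G →
    Q (mapGraph J G) = mapSeq J '' Q G

def listConj (l : List (Form A)) : Form A := l.foldr Form.conj Form.top
def listDisj (l : List (Form A)) : Form A := l.foldr orF (Form.neg Form.top)

noncomputable def pairsList (A : Type) [Fintype A] : List (A × A) := (Finset.univ : Finset (A × A)).toList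
noncomputable def distinctPairs (A : Type) [Fintype A] [DecidableEq A] : List (A × A) :=
  (pairsList A).filter (fun c => decide (c.1 ≠ c.2))

/-- The formula `Ex`: all agents are experts. -/
noncomputable def ExForm (A : Type) [Fintype A] : Form A :=
  listConj ((pairsList A).map (fun c => Form.atomS c.1 c.2))

/-- `Ex ∨ ⋁_{i≠j} (N_ij ∧ P_ij)`. -/
noncomputable def oneStepBody (A : Type) [Fintype A] [DecidableEq A] (P : Protocol A) : Form A :=
  orF (ExForm A) (listDisj ((distinctPairs A).map (fun c => Form.conj (Form.atomN c.1 c.2) (P c.1 c.2))))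

/-- Hard one-step strengthening: `P_ab ∧ K_a^P [ab](Ex ∨ ⋁_{i≠j}(N_ij ∧ P_ij))`. -/
noncomputable def hardOneStep {A : Type} [Fintype A] [DecidableEq A] (P : Protocol A) : Protocol A :=
  fun a b => Form.conj (P a b) (Form.K a P (Form.box (Prog.call a b) (oneStepBody A P)))

/-- Soft one-step strengthening: `P_ab ∧ K̂_a^P [ab](Ex ∨ ⋁_{i≠j}(N_ij ∧ P_ij))`. -/
noncomputable def softOneStep {A : Type} [Fintype A] [DecidableEq A] (P : Protocol A) : Protocol A :=
  fun a b => Form.conj (P a b) (hatK a P (Form.box (Prog.call a b) (oneStepBody A P)))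

/-- The protocol `P` as a program:
`(⋃_{a≠b} ?(N_ab ∧ P_ab);ab)* ; ?⋀_{a≠b} ¬(N_ab ∧ P_ab)`. -/
noncomputable def protProg (A : Type) [Fintype A] [DecidableEq A] (P : Protocol A) : Prog A :=
  Prog.seq
    (Prog.star (((distinctPairs A).map (fun c =>
      Prog.seq (Prog.test (Form.conj (Form.atomN c.1 c.2) (P c.1 c.2))) (Prog.call c.1 c.2))).foldr
        Prog.cup (Prog.test (Form.neg Form.top))))
    (Prog.test (listConj ((distinctPairs A).map (fun c =>
      Form.neg (Form.conj (Form.atomN c.1 c.2) (P c.1 c.2))))))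

/-- Hard look-ahead strengthening: `P_ab ∧ K_a^P [ab]⟨P⟩Ex`. -/
noncomputable def hardLookAhead {A : Type} [Fintype A] [DecidableEq A] (P : Protocol A) : Protocol A :=
  fun a b => Form.conj (P a b)
    (Form.K a P (Form.box (Prog.call a b)
      (Form.neg (Form.box (protProg A P) (Form.neg (ExForm A))))))

/-- Soft look-ahead strengthening: `P_ab ∧ K̂_a^P [ab]⟨P⟩Ex`. -/
noncomputable def softLookAhead {A : Type} [Fintype A] [DecidableEq A] (P : Protocol A) : Protocol A :=
  fun a b => Form.conj (P a b)
    (hatK a P (Form.box (Prog.call a b)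
      (Form.neg (Form.box (protProg A P) (Form.neg (ExForm A))))))

/-- Hard uniform backward defoliation of a semantic protocol. -/
def HUBD (Q : RawSem A) : RawSem A := fun G =>
  { σ | σ ∈ Q G ∧ (σ = [] ∨ ∃ τ : List (A × A), ∃ a b : A, σ = τ ++ [(a, b)] ∧
      ∀ τ', Epi G (semPerm Q G) a τ' τ →
        (τ' ++ [(a, b)] ∈ Q G ∧ TerminalIn Q G (τ' ++ [(a, b)])) →
          AllExpert (doCalls G (τ' ++ [(a, b)]))) }

/-- Soft uniform backward defoliation of a semantic protocol. -/
def SUBD (Q : RawSem A) : RawSem A := fun G =>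
  { σ | σ ∈ Q G ∧ (σ = [] ∨ ∃ τ : List (A × A), ∃ a b : A, σ = τ ++ [(a, b)] ∧
      ∃ τ', Epi G (semPerm Q G) a τ' τ ∧
        ((τ' ++ [(a, b)] ∈ Q G ∧ TerminalIn Q G (τ' ++ [(a, b)])) →
          AllExpert (doCalls G (τ' ++ [(a, b)])))) }

/-- The syntactic protocol LNS: `LNS_ab := ¬ S_ab`. -/
def LNSsyn (A : Type) : Protocol A := fun a b => Form.neg (Form.atomS a b)

/-- LNS-permitted: call `ab` permitted at `(G,σ)` iff `N^σ a b` and not `S^σ a b`. -/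
def LNSperm (G : GossipGraph A) (σ : List (A × A)) (c : A × A) : Prop :=
  c.1 ≠ c.2 ∧ (doCalls G σ).N c.1 c.2 ∧ ¬ (doCalls G σ).S c.1 c.2

/-- LNS as a semantic protocol. -/
def LNSsem : RawSem A := fun G => { σ | Ext G (LNSperm G) σ }

/-- A semantic protocol is strongly successful on `G` iff every terminal sequence makes
all agents experts. -/
def StronglySuccessfulOn (Q : RawSem A) (G : GossipGraph A) : Prop :=
  ∀ σ ∈ Q G, TerminalIn Q G σ → AllExpert (doCalls G σ)

/-- A semantic protocol is weakly successful on `G` iff some terminal sequence makes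
all agents experts. -/
def WeaklySuccessfulOn (Q : RawSem A) (G : GossipGraph A) : Prop :=
  ∃ σ ∈ Q G, TerminalIn Q G σ ∧ AllExpert (doCalls G σ)



section Aux
variable {A : Type}

lemma sat_neg (G : GossipGraph A) (σ) (φ : Form A) : Sat G σ (Form.neg φ) ↔ ¬ Sat G σ φ := by
  simp [Sat]

lemma sat_conj (G : GossipGraph A) (σ) (φ ψ : Form A) :
    Sat G σ (Form.conj φ ψ) ↔ Sat G σ φ ∧ Sat G σ ψ := by
  simp [Sat]

lemma doCalls_cons (G : GossipGraph A) (c σ) : doCalls G (c :: σ) = doCalls (doCall G c) σ := rfl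

lemma doCalls_snoc (G : GossipGraph A) (σ c) : doCalls G (σ ++ [c]) = doCall (doCalls G σ) c := by
  simp [doCalls]

lemma possible_snoc (G : GossipGraph A) (σ c) :
    PossibleSeq G (σ ++ [c]) ↔ PossibleSeq G σ ∧ c.1 ≠ c.2 ∧ (doCalls G σ).N c.1 c.2 := by
  induction σ generalizing G with
  | nil => simp [PossibleSeq, doCalls]
  | cons d σ ih => simp [PossibleSeq, List.cons_append, ih, doCalls_cons]; tauto


lemma sat_K (G : GossipGraph A) (σ) (a : A) (P : Protocol A) (φ : Form A) :
    Sat G σ (Form.K a P φ) ↔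
      ∀ τ, Epi G (fun ρ c => c.1 ≠ c.2 ∧ (doCalls G ρ).N c.1 c.2 ∧ Sat G ρ (P c.1 c.2)) a τ σ →
        Sat G τ φ := by
  simp [Sat]

lemma sat_box_call (G : GossipGraph A) (σ) (a b : A) (φ : Form A) :
    Sat G σ (Form.box (Prog.call a b) φ) ↔
      (a ≠ b → (doCalls G σ).N a b → Sat G (σ ++ [(a, b)]) φ) := by
  simp only [Sat, ProgRel]
  constructor
  · intro h h1 h2; exact h _ ⟨h1, h2, rfl⟩
  · rintro h τ ⟨h1, h2, rfl⟩; exact h h1 h2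

lemma sat_orF (G : GossipGraph A) (σ) (φ ψ : Form A) :
    Sat G σ (orF φ ψ) ↔ Sat G σ φ ∨ Sat G σ ψ := by
  simp [orF, Sat]; tauto

lemma sat_impF (G : GossipGraph A) (σ) (φ ψ : Form A) :
    Sat G σ (impF φ ψ) ↔ (Sat G σ φ → Sat G σ ψ) := by
  simp only [impF, Sat]; tauto

lemma sat_listDisj (G : GossipGraph A) (σ) (l : List (Form A)) :
    Sat G σ (listDisj l) ↔ ∃ φ ∈ l, Sat G σ φ := by
  induction l with
  | nil => simp [listDisj, Sat]
  | cons φ l ih =>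
      rw [show listDisj (φ :: l) = orF φ (listDisj l) from rfl, sat_orF, ih]
      simp

lemma epi_mono {G : GossipGraph A} {p q : List (A × A) → (A × A) → Prop}
    (hpN : ∀ ρ c, p ρ c → c.1 ≠ c.2 ∧ (doCalls G ρ).N c.1 c.2)
    (hpq : ∀ ρ c, PossibleSeq G ρ → p ρ c → q ρ c)
    {a : A} {σ τ} (h : Epi G p a σ τ) :
    Epi G q a σ τ ∧ PossibleSeq G σ ∧ PossibleSeq G τ := by
  induction h with
  | refl => exact ⟨Epi.refl, trivial, trivial⟩
  | call_out h1 h2 h3 h4 h5 ih =>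
      obtain ⟨he, hs, ht⟩ := ih
      exact ⟨Epi.call_out he h2 h3 (hpq _ _ hs h4) (hpq _ _ ht h5),
        (possible_snoc ..).mpr ⟨hs, hpN _ _ h4⟩, (possible_snoc ..).mpr ⟨ht, hpN _ _ h5⟩⟩
  | call_in h1 h2 h3 h4 h5 ih =>
      obtain ⟨he, hs, ht⟩ := ih
      exact ⟨Epi.call_in he h2 h3 (hpq _ _ hs h4) (hpq _ _ ht h5),
        (possible_snoc ..).mpr ⟨hs, hpN _ _ h4⟩, (possible_snoc ..).mpr ⟨ht, hpN _ _ h5⟩⟩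
  | other h1 hc hd he' hf h4 h5 ih =>
      obtain ⟨he, hs, ht⟩ := ih
      exact ⟨Epi.other he hc hd he' hf (hpq _ _ hs h4) (hpq _ _ ht h5),
        (possible_snoc ..).mpr ⟨hs, hpN _ _ h4⟩, (possible_snoc ..).mpr ⟨ht, hpN _ _ h5⟩⟩

lemma mem_distinctPairs_ne [Fintype A] [DecidableEq A] {c : A × A}
    (hc : c ∈ distinctPairs A) : c.1 ≠ c.2 := by
  have := (List.mem_filter.mp hc).2
  simpa using this

lemma body_mono [Fintype A] [DecidableEq A] {G : GossipGraph A} {P Q : Protocol A}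
    (h' : ∀ ρ (c : A × A), PossibleSeq G ρ → c.1 ≠ c.2 → Sat G ρ (Q c.1 c.2) → Sat G ρ (P c.1 c.2))
    (ρ) (hρ : PossibleSeq G ρ) (hb : Sat G ρ (oneStepBody A Q)) : Sat G ρ (oneStepBody A P) := by
  rw [oneStepBody, sat_orF] at hb ⊢
  rcases hb with hb | hb
  · exact Or.inl hb
  · right
    rw [sat_listDisj] at hb ⊢
    obtain ⟨φ, hφ, hsat⟩ := hb
    simp only [List.mem_map] at hφ
    obtain ⟨c, hc, rfl⟩ := hφ
    rw [sat_conj] at hsat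
    exact ⟨_, List.mem_map.mpr ⟨c, hc, rfl⟩,
      (sat_conj ..).mpr ⟨hsat.1, h' ρ c hρ (mem_distinctPairs_ne hc) hsat.2⟩⟩

end Aux

/-- Soft one-step strengthening is monotone: if `Q_{ab} → P_{ab}` is valid for all distinct
`a`,`b`, then so is `Q^◊_{ab} → P^◊_{ab}`; in particular the extension of `Q^◊` is contained
in the extension of `P^◊` on every initial gossip graph. -/
theorem soft_onestep_monotone {A : Type} [Fintype A] [DecidableEq A] (P Q : Protocol A)
    (h : ∀ a b : A, a ≠ b → Valid (impF (Q a b) (P a b))) :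
    (∀ a b : A, a ≠ b → Valid (impF (softOneStep Q a b) (softOneStep P a b))) ∧
    (∀ G : GossipGraph A, Initial G →
      extension (softOneStep Q) G ⊆ extension (softOneStep P) G) := by
  classical
  have main : ∀ G : GossipGraph A, Initial G → ∀ σ, PossibleSeq G σ → ∀ a b : A, a ≠ b →
      Sat G σ (softOneStep Q a b) → Sat G σ (softOneStep P a b) := by
    intro G hG σ hσ a b hab hQ
    have h' : ∀ ρ (c : A × A), PossibleSeq G ρ → c.1 ≠ c.2 →
        Sat G ρ (Q c.1 c.2) → Sat G ρ (P c.1 c.2) := by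
      intro ρ c hρ hne hq
      exact (sat_impF ..).mp (h c.1 c.2 hne G hG ρ hρ) hq
    rw [softOneStep, sat_conj] at hQ ⊢
    obtain ⟨hQ1, hQ2⟩ := hQ
    refine ⟨h' σ (a, b) hσ hab hQ1, ?_⟩
    rw [hatK, sat_neg, sat_K] at hQ2 ⊢
    push_neg at hQ2 ⊢
    obtain ⟨τ, hτ, hsat⟩ := hQ2
    rw [sat_neg, not_not] at hsat
    obtain ⟨hτP, hτpos, -⟩ := epi_mono
      (q := fun ρ c => c.1 ≠ c.2 ∧ (doCalls G ρ).N c.1 c.2 ∧ Sat G ρ (P c.1 c.2))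
      (fun ρ c hp => ⟨hp.1, hp.2.1⟩)
      (fun ρ c hρ hp => ⟨hp.1, hp.2.1, h' ρ c hρ hp.1 hp.2.2⟩) hτ
    refine ⟨τ, hτP, ?_⟩
    rw [sat_neg, not_not, sat_box_call]
    rw [sat_box_call] at hsat
    intro h1 h2
    exact body_mono h' _ ((possible_snoc ..).mpr ⟨hτpos, h1, h2⟩) (hsat h1 h2)
  constructor
  · intro a b hab G hG σ hσ
    rw [sat_impF]
    exact main G hG σ hσ a b hab
  · intro G hG σ hσ
    have pos : ∀ ρ, Ext G (Permits G (softOneStep Q)) ρ → PossibleSeq G ρ := by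
      intro ρ hρ
      induction hρ with
      | nil => trivial
      | snoc he hp ih => exact (possible_snoc ..).mpr ⟨ih, hp.1, hp.2.1⟩
    simp only [extension, Set.mem_setOf_eq] at hσ ⊢
    induction hσ with
    | nil => exact Ext.nil
    | @snoc ρ c he hp ih =>
        exact Ext.snoc ih ⟨hp.1, hp.2.1, main G hG ρ (pos ρ he) c.1 c.2 hp.1 hp.2.2⟩

end Gossip
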